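/- arXiv:2201.10989 — 6 statements merged into one kernel-verified Lean document; each statement's English description precedes it below -/
import Mathlib

section
/- Sample monotonicity: if (w_1, ..., w_{K+1}) are exchangeable positive integrable random variables, then E[log((w_1 + ... + w_K)/K)] ≤ E[log((w_1 + ... + w_{K+1})/(K+1))], assuming both expectations exist. -/
/-!
Write `S = w₁ + ⋯ + w_{K+1}`. Swapping `j` with the last index is a permutation, so by
exchangeability every leave-one-out log-mean `log ((S - w_j) / K)` has the same law as
`log ((w₁ + ⋯ + w_K) / K)`. Hence the left-hand side is the expectation of the average over `j`
of these leave-one-out log-means. Pointwise, the leave-one-out means average to `S / (K + 1)`,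
so by concavity of `log` their log-average is at most `log (S / (K + 1))`.
-/

open MeasureTheory ProbabilityTheory Finset Real

lemma identDistrib_comp_perm {Ω ι β : Type*} [MeasurableSpace Ω] [MeasurableSpace β]
    [Countable ι] {P : Measure Ω} {w : ι → Ω → β} (hw : ∀ i, AEMeasurable (w i) P)
    {σ : Equiv.Perm ι}
    (hσ : P.map (fun ω i => w (σ i) ω) = P.map (fun ω i => w i ω)) :
    IdentDistrib (fun ω i => w (σ i) ω) (fun ω i => w i ω) P P where
  aemeasurable_fst := aemeasurable_pi_lambda _ fun i => hw (σ i)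
  aemeasurable_snd := aemeasurable_pi_lambda _ hw
  map_eq := hσ

lemma sum_sub_comp_swap {ι : Type*} [Fintype ι] [DecidableEq ι] (x : ι → ℝ) (j k : ι) :
    ∑ i, x (Equiv.swap j k i) - x (Equiv.swap j k k) = ∑ i, x i - x j := by
  rw [Equiv.sum_comp, Equiv.swap_apply_right]

lemma sum_castSucc_eq_sum_sub_last {K : ℕ} (x : Fin (K + 1) → ℝ) :
    ∑ i : Fin K, x i.castSucc = ∑ i, x i - x (Fin.last K) := by
  rw [Fin.sum_univ_castSucc, add_sub_cancel_right]

lemma sum_sub_apply_pos {ι : Type*} [Fintype ι] {x : ι → ℝ} (hx : ∀ i, 0 < x i)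
    (hι : 1 < Fintype.card ι) (j : ι) : 0 < ∑ i, x i - x j := by
  classical
  rw [← sum_erase_eq_sub (mem_univ j)]
  refine sum_pos (fun i _ => hx i) ?_
  rw [← card_pos, card_erase_of_mem (mem_univ j), card_univ]
  omega

lemma mean_log_leaveOneOut_mean_le_log_mean {ι : Type*} [Fintype ι] {K : ℕ} (hK : 0 < K)
    (hι : Fintype.card ι = K + 1) {x : ι → ℝ} (hx : ∀ i, 0 < x i) :
    (∑ j, log ((∑ i, x i - x j) / K)) / (K + 1) ≤ log ((∑ i, x i) / (K + 1)) := by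
  have hKR : (0 : ℝ) < K := by exact_mod_cast hK
  have hmean : ∑ j, (K + 1 : ℝ)⁻¹ * ((∑ i, x i - x j) / K) = (∑ i, x i) / (K + 1) := by
    rw [← mul_sum, ← sum_div, sum_sub_distrib, sum_const, card_univ, hι, nsmul_eq_mul]
    push_cast
    field_simp
    ring
  have h := strictConcaveOn_log_Ioi.concaveOn.le_map_sum (t := univ)
    (w := fun _ => (K + 1 : ℝ)⁻¹) (p := fun j => (∑ i, x i - x j) / K)
    (fun _ _ => by positivity)
    (by rw [sum_const, card_univ, hι, nsmul_eq_mul]; push_cast; field_simp)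
    (fun j _ => div_pos (sum_sub_apply_pos hx (by omega) j) hKR)
  simp only [smul_eq_mul] at h
  rwa [hmean, ← mul_sum, inv_mul_eq_div] at h

theorem sample_monotonicity_general {Ω : Type*} [MeasurableSpace Ω] (P : Measure Ω)
    (K : ℕ) (hK : 0 < K) (w : Fin (K + 1) → Ω → ℝ)
    (hexch : ∀ σ : Equiv.Perm (Fin (K + 1)),
      Measure.map (fun ω => fun i => w (σ i) ω) P
        = Measure.map (fun ω => fun i => w i ω) P)
    (hpos : ∀ i, ∀ᵐ ω ∂P, 0 < w i ω)
    (hint : ∀ i, Integrable (w i) P)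
    (hlogK : Integrable
      (fun ω => Real.log ((∑ i : Fin K, w i.castSucc ω) / K)) P)
    (hlogK1 : Integrable
      (fun ω => Real.log ((∑ i : Fin (K + 1), w i ω) / (K + 1))) P) :
    ∫ ω, Real.log ((∑ i : Fin K, w i.castSucc ω) / K) ∂P
      ≤ ∫ ω, Real.log ((∑ i : Fin (K + 1), w i ω) / (K + 1)) ∂P := by
  classical
  set LK : Ω → ℝ := fun ω => log ((∑ i : Fin K, w i.castSucc ω) / K)
  set L : Fin (K + 1) → Ω → ℝ := fun j ω => log ((∑ i, w i ω - w j ω) / K)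
  set g : (Fin (K + 1) → ℝ) → ℝ := fun v => log ((∑ i, v i - v (Fin.last K)) / K)
  have hg : Measurable g := by fun_prop
  have hident (j) : IdentDistrib (L j) LK P P := by
    have hLg : L j = fun ω => g fun i => w (Equiv.swap j (Fin.last K) i) ω := by
      ext ω
      simp only [L, g, sum_sub_comp_swap (fun i => w i ω)]
    have hKg : LK = fun ω => g fun i => w i ω := by
      ext ω
      simp only [LK, g, sum_castSucc_eq_sum_sub_last (fun i => w i ω)]
    rw [hLg, hKg]
    exact (identDistrib_comp_perm (fun i => (hint i).aemeasurable) (hexch _)).comp hg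
  have hintL (j) : Integrable (L j) P := (hident j).integrable_iff.2 hlogK
  calc ∫ ω, LK ω ∂P = ∫ ω, (∑ j, L j ω) / (K + 1) ∂P := by
        rw [integral_div, integral_finsetSum _ fun j _ => hintL j,
          sum_congr rfl fun j _ => (hident j).integral_eq, sum_const, card_univ,
          Fintype.card_fin, nsmul_eq_mul]
        push_cast
        field_simp
    _ ≤ _ := by
        refine integral_mono_ae ((integrable_finsetSum _ fun j _ => hintL j).div_const _) hlogK1 ?_
        filter_upwards [ae_all_iff.2 hpos] with ω hω using
          mean_log_leaveOneOut_mean_le_log_mean hK (Fintype.card_fin _) hω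

/-- sample monotonicity for exchangeable positive integrable weights. -/
theorem sample_monotonicity {Ω : Type*} [MeasurableSpace Ω] (P : Measure Ω)
    [IsProbabilityMeasure P] (K : ℕ) (hK : 0 < K) (w : Fin (K + 1) → Ω → ℝ)
    (hexch : ∀ σ : Equiv.Perm (Fin (K + 1)),
      Measure.map (fun ω => fun i => w (σ i) ω) P
        = Measure.map (fun ω => fun i => w i ω) P)
    (hpos : ∀ i, ∀ᵐ ω ∂P, 0 < w i ω)
    (hint : ∀ i, Integrable (w i) P)
    (hlogK : Integrable
      (fun ω => Real.log ((∑ i : Fin K, w i.castSucc ω) / K)) P)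
    (hlogK1 : Integrable
      (fun ω => Real.log ((∑ i : Fin (K + 1), w i ω) / (K + 1))) P) :
    ∫ ω, Real.log ((∑ i : Fin K, w i.castSucc ω) / K) ∂P
      ≤ ∫ ω, Real.log ((∑ i : Fin (K + 1), w i ω) / (K + 1)) ∂P :=
  sample_monotonicity_general P K hK w hexch hpos hint hlogK hlogK1
end

section
/- Let x, y be i.i.d. positive integrable random variables and set w_1 = x, w_2 = y, w_3 = x. Then E[log((w_1+w_2)/2)] ≥ E[log((w_1+w_2+w_3)/3)], assuming both expectations exist. (Hence identically distributed weights do not suffice for sample monotonicity.) -/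
open MeasureTheory ProbabilityTheory

/-! By concavity of `log`, `log((2a+b)/3) + log((a+2b)/3) ≤ 2 log((a+b)/2)` for `a, b > 0`,
since both weighted means average to `(a+b)/2`. For i.i.d. `x, y` the pair `(x, y)` is
exchangeable, so `E[log((2x+y)/3)] = E[log((x+2y)/3)]`, and averaging the two expectations
gives the claim. -/

theorem Real.log_add_log_le_two_mul_log_add_div_two {u v : ℝ} (hu : 0 < u) (hv : 0 < v) :
    Real.log u + Real.log v ≤ 2 * Real.log ((u + v) / 2) := by
  rw [← Real.log_mul hu.ne' hv.ne', ← Nat.cast_ofNat, ← Real.log_pow]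
  exact Real.log_le_log (by positivity) (by nlinarith [sq_nonneg (u - v)])

theorem Real.log_mean_add_log_mean_le_two_mul_log_mean {a b : ℝ} (ha : 0 < a) (hb : 0 < b) :
    Real.log ((a + b + a) / 3) + Real.log ((b + a + b) / 3) ≤ 2 * Real.log ((a + b) / 2) := by
  have hsum : ((a + b + a) / 3 + (b + a + b) / 3) / 2 = (a + b) / 2 := by ring
  simpa only [hsum] using
    Real.log_add_log_le_two_mul_log_add_div_two (u := (a + b + a) / 3) (v := (b + a + b) / 3)
      (by positivity) (by positivity)

namespace ProbabilityTheory

variable {Ω β : Type*} [MeasurableSpace Ω] [MeasurableSpace β] {P : Measure Ω} {x y : Ω → β}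

theorem IndepFun.identDistrib_prodMk_swap [IsFiniteMeasure P] (hx : AEMeasurable x P)
    (hy : AEMeasurable y P) (hind : IndepFun x y P) (hid : P.map x = P.map y) :
    IdentDistrib (fun ω ↦ (x ω, y ω)) (fun ω ↦ (y ω, x ω)) P P where
  aemeasurable_fst := hx.prodMk hy
  aemeasurable_snd := hy.prodMk hx
  map_eq := by
    rw [(indepFun_iff_map_prod_eq_prod_map_map hx hy).mp hind,
      (indepFun_iff_map_prod_eq_prod_map_map hy hx).mp hind.symm, hid]

theorem IdentDistrib.integral_le_of_add_swap_le
    (hswap : IdentDistrib (fun ω ↦ (x ω, y ω)) (fun ω ↦ (y ω, x ω)) P P)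
    {f g : β × β → ℝ} (hf : Measurable f) (hfi : Integrable (fun ω ↦ f (x ω, y ω)) P)
    (hgi : Integrable (fun ω ↦ g (x ω, y ω)) P)
    (hfg : ∀ᵐ ω ∂P, f (x ω, y ω) + f (y ω, x ω) ≤ 2 * g (x ω, y ω)) :
    ∫ ω, f (x ω, y ω) ∂P ≤ ∫ ω, g (x ω, y ω) ∂P := by
  have hf_swap : IdentDistrib (fun ω ↦ f (x ω, y ω)) (fun ω ↦ f (y ω, x ω)) P P :=
    hswap.comp hf
  have hfi_swap : Integrable (fun ω ↦ f (y ω, x ω)) P := hf_swap.integrable_iff.mp hfi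
  have hsum : ∫ ω, f (x ω, y ω) + f (y ω, x ω) ∂P ≤ ∫ ω, 2 * g (x ω, y ω) ∂P :=
    integral_mono_ae (hfi.add hfi_swap) (hgi.const_mul 2) hfg
  rw [integral_add hfi hfi_swap, ← hf_swap.integral_eq, integral_const_mul] at hsum
  linarith

end ProbabilityTheory

/-- with i.i.d. `x, y` and weights `w₁ = x, w₂ = y, w₃ = x`
(identically distributed but not exchangeable), the 2-sample MCO dominates
the 3-sample one. -/
theorem id_not_enough {Ω : Type*} [MeasurableSpace Ω] (P : Measure Ω)
    [IsProbabilityMeasure P] (x y : Ω → ℝ)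
    (hindep : IndepFun x y P)
    (hid : Measure.map x P = Measure.map y P)
    (hxpos : ∀ᵐ ω ∂P, 0 < x ω) (hypos : ∀ᵐ ω ∂P, 0 < y ω)
    (hxint : Integrable x P) (hyint : Integrable y P)
    (hlog2 : Integrable (fun ω => Real.log ((x ω + y ω) / 2)) P)
    (hlog3 : Integrable (fun ω => Real.log ((x ω + y ω + x ω) / 3)) P) :
    ∫ ω, Real.log ((x ω + y ω + x ω) / 3) ∂P
      ≤ ∫ ω, Real.log ((x ω + y ω) / 2) ∂P := by
  have hswap := hindep.identDistrib_prodMk_swap hxint.aemeasurable hyint.aemeasurable hid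
  refine hswap.integral_le_of_add_swap_le (f := fun p ↦ Real.log ((p.1 + p.2 + p.1) / 3))
    (g := fun p ↦ Real.log ((p.1 + p.2) / 2)) (by fun_prop) hlog3 hlog2 ?_
  filter_upwards [hxpos, hypos] with ω hx hy
  exact Real.log_mean_add_log_mean_le_two_mul_log_mean hx hy
end

section
/- If R ~ Gamma(α, β) and R' ~ Gamma(a, b) with α,β,a,b > 0 and equal means (α/β = a/b), then E[log R] > E[log R'] if and only if β > b. -/
open MeasureTheory ProbabilityTheory Real Set

/-!
Write `ℓ_{α,β}(x) = α log β - log Γ(α) + (α - 1) log x - β x` for the log-density of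
`Gamma(α, β)` on `(0, ∞)`. For distinct laws `μ = Gamma(α, β)` and `ν = Gamma(a, b)`, Gibbs'
inequality (strict Jensen for `exp`, since `∫ exp (ℓ_ν - ℓ_μ) dμ = 1`) gives
`E_μ[ℓ_ν - ℓ_μ] < 0`; strictness holds because `log x` and `x` are affinely independent on
`(0, ∞)`. Adding this to the same inequality with `μ` and `ν` swapped, the normalising constants
cancel, and so do the terms linear in `x` because the means agree, leaving
`(α - a) (E_μ[log] - E_ν[log]) > 0`. Equal means force `α - a` and `β - b` to have the same
sign.
-/

lemma integral_lt_zero_of_integral_exp_eq_one {Ω : Type*} [MeasurableSpace Ω] {μ : Measure Ω}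
    [IsProbabilityMeasure μ] {φ : Ω → ℝ} (hφ : Integrable φ μ)
    (hexp : Integrable (fun ω => exp (φ ω)) μ) (hexp_one : ∫ ω, exp (φ ω) ∂μ = 1)
    (hφ_const : ∀ c : ℝ, ¬ φ =ᵐ[μ] fun _ => c) :
    ∫ ω, φ ω ∂μ < 0 := by
  rcases strictConvexOn_exp.ae_eq_const_or_map_average_lt continuousOn_exp isClosed_univ
      (ae_of_all _ fun _ => mem_univ _) hφ hexp with h | h
  · exact absurd h (hφ_const _)
  · rwa [average_eq_integral, average_eq_integral, hexp_one, exp_lt_one_iff] at h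

lemma Real.abs_log_le_rpow_add_rpow_neg_div {x ε : ℝ} (hx : 0 < x) (hε : 0 < ε) :
    |log x| ≤ (x ^ ε + x ^ (-ε)) / ε := by
  have hpos := log_le_rpow_div hx.le hε
  have hneg := log_le_rpow_div (inv_pos.2 hx).le hε
  rw [log_inv, inv_rpow hx.le, ← rpow_neg hx.le] at hneg
  have : 0 ≤ x ^ ε / ε := by positivity
  have : 0 ≤ x ^ (-ε) / ε := by positivity
  rw [add_div]
  exact abs_le.2 ⟨by linarith, by linarith⟩

lemma integral_comp_of_map_eq {Ω : Type*} [MeasurableSpace Ω] {P : Measure Ω} {X : Ω → ℝ}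
    {ν : Measure ℝ} [NeZero ν] (hX : P.map X = ν) {f : ℝ → ℝ}
    (hf : AEStronglyMeasurable f ν) :
    ∫ ω, f (X ω) ∂P = ∫ x, f x ∂ν :=
  (HasLaw.mk (.of_map_ne_zero (hX ▸ NeZero.ne ν)) hX).integral_comp hf

namespace ProbabilityTheory

variable {α β a b : ℝ}

lemma gammaMeasure_eq_withDensity_restrict_Ioi (α β : ℝ) :
    gammaMeasure α β = (volume.restrict (Ioi 0)).withDensity (gammaPDF α β) := by
  rw [← withDensity_indicator measurableSet_Ioi, gammaMeasure]
  refine withDensity_congr_ae ?_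
  filter_upwards [Measure.ae_ne volume (0 : ℝ)] with x hx
  rcases hx.lt_or_gt with hx | hx
  · simp [gammaPDF_of_neg hx, indicator_of_notMem (notMem_Ioi.mpr hx.le)]
  · simp [indicator_of_mem (mem_Ioi.mpr hx)]

lemma measurable_gammaPDF (α β : ℝ) : Measurable (gammaPDF α β) :=
  (measurable_gammaPDFReal α β).ennreal_ofReal

lemma integral_gammaMeasure (hα : 0 < α) (hβ : 0 < β) (g : ℝ → ℝ) :
    ∫ x, g x ∂gammaMeasure α β = ∫ x in Ioi 0, gammaPDFReal α β x * g x := by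
  rw [gammaMeasure_eq_withDensity_restrict_Ioi, integral_withDensity_eq_integral_toReal_smul
    (measurable_gammaPDF α β) (ae_of_all _ fun _ => ENNReal.ofReal_lt_top)]
  simp_rw [gammaPDF, ENNReal.toReal_ofReal (gammaPDFReal_nonneg hα hβ _), smul_eq_mul]

lemma integrable_gammaMeasure_iff (hα : 0 < α) (hβ : 0 < β) {g : ℝ → ℝ} :
    Integrable g (gammaMeasure α β) ↔
      IntegrableOn (fun x => gammaPDFReal α β x * g x) (Ioi 0) := by
  rw [gammaMeasure_eq_withDensity_restrict_Ioi, integrable_withDensity_iff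
    (measurable_gammaPDF α β) (ae_of_all _ fun _ => ENNReal.ofReal_lt_top)]
  simp_rw [gammaPDF, ENNReal.toReal_ofReal (gammaPDFReal_nonneg hα hβ _), mul_comm (g _)]
  rfl

lemma restrict_Ioi_absolutelyContinuous_gammaMeasure (hα : 0 < α) (hβ : 0 < β) :
    volume.restrict (Ioi 0) ≪ gammaMeasure α β := by
  rw [gammaMeasure_eq_withDensity_restrict_Ioi]
  refine withDensity_absolutelyContinuous' (measurable_gammaPDF α β).aemeasurable ?_
  filter_upwards [ae_restrict_mem measurableSet_Ioi] with x hx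
  exact (ENNReal.ofReal_pos.mpr (gammaPDFReal_pos hα hβ hx)).ne'

noncomputable def gammaLogPDF (α β x : ℝ) : ℝ :=
  α * log β - log (Gamma α) + (α - 1) * log x - β * x

lemma gammaPDFReal_eq_exp_gammaLogPDF (hα : 0 < α) (hβ : 0 < β) {x : ℝ} (hx : 0 < x) :
    gammaPDFReal α β x = exp (gammaLogPDF α β x) := by
  rw [gammaPDFReal, if_pos hx.le, gammaLogPDF, exp_sub, exp_add, exp_sub,
    exp_log (Gamma_pos_of_pos hα), rpow_def_of_pos hβ, rpow_def_of_pos hx, exp_neg]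
  ring_nf

lemma gammaPDFReal_mul_rpow (hα : 0 < α) (hβ : 0 < β) {s : ℝ} (hs : 0 < α + s) {x : ℝ}
    (hx : 0 < x) :
    gammaPDFReal α β x * x ^ s =
      Gamma (α + s) / (Gamma α * β ^ s) * gammaPDFReal (α + s) β x := by
  have hΓ := Gamma_pos_of_pos hα
  have hΓs := Gamma_pos_of_pos hs
  rw [gammaPDFReal_eq_exp_gammaLogPDF hα hβ hx, gammaPDFReal_eq_exp_gammaLogPDF hs hβ hx,
    rpow_def_of_pos hx, ← exp_add,
    ← exp_log (by positivity : 0 < Gamma (α + s) / (Gamma α * β ^ s)), ← exp_add,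
    log_div hΓs.ne' (by positivity), log_mul hΓ.ne' (by positivity), log_rpow hβ,
    gammaLogPDF, gammaLogPDF]
  ring_nf

lemma ae_pos_gammaMeasure (α β : ℝ) : ∀ᵐ x ∂gammaMeasure α β, 0 < x := by
  rw [gammaMeasure_eq_withDensity_restrict_Ioi]
  exact (withDensity_absolutelyContinuous _ _).ae_le (ae_restrict_mem measurableSet_Ioi)

lemma integrableOn_gammaPDFReal_Ioi (hα : 0 < α) (hβ : 0 < β) :
    IntegrableOn (gammaPDFReal α β) (Ioi 0) := by
  have := isProbabilityMeasure_gammaMeasure hα hβ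
  simpa using (integrable_gammaMeasure_iff hα hβ).1 (integrable_const (1 : ℝ))

lemma setIntegral_gammaPDFReal_Ioi (hα : 0 < α) (hβ : 0 < β) :
    ∫ x in Ioi 0, gammaPDFReal α β x = 1 := by
  have := isProbabilityMeasure_gammaMeasure hα hβ
  simpa using (integral_gammaMeasure hα hβ fun _ => 1).symm

lemma integrable_rpow_gammaMeasure (hα : 0 < α) (hβ : 0 < β) {s : ℝ} (hs : 0 < α + s) :
    Integrable (fun x => x ^ s) (gammaMeasure α β) := by
  rw [integrable_gammaMeasure_iff hα hβ]
  exact IntegrableOn.congr_fun ((integrableOn_gammaPDFReal_Ioi hs hβ).const_mul _)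
    (fun x hx => (gammaPDFReal_mul_rpow hα hβ hs hx).symm) measurableSet_Ioi

lemma integral_rpow_gammaMeasure (hα : 0 < α) (hβ : 0 < β) {s : ℝ} (hs : 0 < α + s) :
    ∫ x, x ^ s ∂gammaMeasure α β = Gamma (α + s) / (Gamma α * β ^ s) := by
  rw [integral_gammaMeasure hα hβ, setIntegral_congr_fun measurableSet_Ioi
    (fun x hx => gammaPDFReal_mul_rpow hα hβ hs hx), integral_const_mul,
    setIntegral_gammaPDFReal_Ioi hs hβ, mul_one]

lemma integrable_id_gammaMeasure (hα : 0 < α) (hβ : 0 < β) :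
    Integrable (fun x => x) (gammaMeasure α β) := by
  simpa using integrable_rpow_gammaMeasure hα hβ (s := 1) (by linarith)

lemma integral_id_gammaMeasure (hα : 0 < α) (hβ : 0 < β) :
    ∫ x, x ∂gammaMeasure α β = α / β := by
  have h := integral_rpow_gammaMeasure hα hβ (s := 1) (by linarith)
  simp only [rpow_one] at h
  rw [h, Gamma_add_one hα.ne', mul_comm (Gamma α) β,
    mul_div_mul_right _ _ (Gamma_pos_of_pos hα).ne']

lemma integrable_log_gammaMeasure (hα : 0 < α) (hβ : 0 < β) :
    Integrable log (gammaMeasure α β) := by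
  have hε : 0 < α / 2 := by positivity
  refine Integrable.mono' (((integrable_rpow_gammaMeasure hα hβ (s := α / 2) (by linarith)).add
    (integrable_rpow_gammaMeasure hα hβ (s := -(α / 2)) (by linarith))).div_const (α / 2))
    measurable_log.aestronglyMeasurable ?_
  filter_upwards [ae_pos_gammaMeasure α β] with x hx
  exact abs_log_le_rpow_add_rpow_neg_div hx hε

lemma integrable_gammaLogPDF (hα : 0 < α) (hβ : 0 < β) (a b : ℝ) :
    Integrable (gammaLogPDF a b) (gammaMeasure α β) := by
  have := isProbabilityMeasure_gammaMeasure hα hβ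
  exact ((integrable_const _).add ((integrable_log_gammaMeasure hα hβ).const_mul _)).sub
    ((integrable_id_gammaMeasure hα hβ).const_mul _)

lemma integral_gammaLogPDF (hα : 0 < α) (hβ : 0 < β) (a b : ℝ) :
    ∫ x, gammaLogPDF a b x ∂gammaMeasure α β =
      a * log b - log (Gamma a) + (a - 1) * ∫ x, log x ∂gammaMeasure α β - b * (α / β) := by
  have := isProbabilityMeasure_gammaMeasure hα hβ
  simp only [gammaLogPDF]
  have hlog := (integrable_log_gammaMeasure hα hβ).const_mul (a - 1)
  rw [integral_sub (f := fun x => a * log b - log (Gamma a) + (a - 1) * log x)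
      ((integrable_const _).add hlog) ((integrable_id_gammaMeasure hα hβ).const_mul b),
    integral_add (integrable_const _) hlog,
    integral_const_mul, integral_const_mul, integral_id_gammaMeasure hα hβ]
  simp

lemma gammaPDFReal_mul_exp_gammaLogPDF_sub (hα : 0 < α) (hβ : 0 < β) (ha : 0 < a) (hb : 0 < b)
    {x : ℝ} (hx : 0 < x) :
    gammaPDFReal α β x * exp (gammaLogPDF a b x - gammaLogPDF α β x) = gammaPDFReal a b x := by
  rw [gammaPDFReal_eq_exp_gammaLogPDF hα hβ hx, gammaPDFReal_eq_exp_gammaLogPDF ha hb hx,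
    ← exp_add, add_sub_cancel]

lemma not_eqOn_gammaLogPDF_sub_const (hαa : α ≠ a) (b β d : ℝ) :
    ¬ EqOn (fun x => gammaLogPDF a b x - gammaLogPDF α β x) (fun _ => d) (Ioi 0) := by
  intro h
  have h₀ := h (mem_Ioi.2 one_pos)
  have h₁ := h (mem_Ioi.2 (exp_pos 1))
  have h₂ := h (mem_Ioi.2 (exp_pos 2))
  simp only [gammaLogPDF, log_one, log_exp] at h₀ h₁ h₂
  have he : exp 2 = exp 1 ^ 2 := by rw [← exp_nat_mul]; norm_num
  have hq : (b - β) * (exp 1 - 1) ^ 2 = 0 := by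
    linear_combination h₁ * 2 - h₀ - h₂ - (b - β) * he
  have hbβ : b - β = 0 := by simpa [sub_eq_zero] using hq
  exact hαa (by linear_combination h₀ - h₁ - (exp 1 - 1) * hbβ)

lemma integral_gammaLogPDF_sub_lt_zero (hα : 0 < α) (hβ : 0 < β) (ha : 0 < a) (hb : 0 < b)
    (hαa : α ≠ a) :
    ∫ x, (gammaLogPDF a b x - gammaLogPDF α β x) ∂gammaMeasure α β < 0 := by
  have := isProbabilityMeasure_gammaMeasure hα hβ
  refine integral_lt_zero_of_integral_exp_eq_one
    ((integrable_gammaLogPDF hα hβ a b).sub (integrable_gammaLogPDF hα hβ α β)) ?_ ?_ ?_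
  · rw [integrable_gammaMeasure_iff hα hβ]
    exact (integrableOn_gammaPDFReal_Ioi ha hb).congr_fun
      (fun x hx => (gammaPDFReal_mul_exp_gammaLogPDF_sub hα hβ ha hb hx).symm)
      measurableSet_Ioi
  · rw [integral_gammaMeasure hα hβ, setIntegral_congr_fun measurableSet_Ioi
      (fun x hx => gammaPDFReal_mul_exp_gammaLogPDF_sub hα hβ ha hb hx),
      setIntegral_gammaPDFReal_Ioi ha hb]
  · intro d hd
    refine not_eqOn_gammaLogPDF_sub_const hαa b β d
      (Measure.eqOn_open_of_ae_eq
        ((restrict_Ioi_absolutelyContinuous_gammaMeasure hα hβ).ae_eq hd)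
        isOpen_Ioi ?_ continuousOn_const)
    simp only [gammaLogPDF]
    fun_prop (disch := exact fun x hx => (mem_Ioi.1 hx).ne')

lemma integral_log_gammaMeasure_lt_of_lt (hα : 0 < α) (hβ : 0 < β) (ha : 0 < a) (hb : 0 < b)
    (hmean : α / β = a / b) (hbβ : b < β) :
    ∫ x, log x ∂gammaMeasure a b < ∫ x, log x ∂gammaMeasure α β := by
  have haα : a < α := by
    rw [div_eq_div_iff hβ.ne' hb.ne'] at hmean
    nlinarith
  have hμ := integral_gammaLogPDF_sub_lt_zero hα hβ ha hb haα.ne'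
  have hν := integral_gammaLogPDF_sub_lt_zero ha hb hα hβ haα.ne
  rw [integral_sub (integrable_gammaLogPDF hα hβ a b) (integrable_gammaLogPDF hα hβ α β),
    integral_gammaLogPDF hα hβ, integral_gammaLogPDF hα hβ, hmean] at hμ
  rw [integral_sub (integrable_gammaLogPDF ha hb α β) (integrable_gammaLogPDF ha hb a b),
    integral_gammaLogPDF ha hb, integral_gammaLogPDF ha hb] at hν
  have key :
      0 < (α - a) * (∫ x, log x ∂gammaMeasure α β - ∫ x, log x ∂gammaMeasure a b) := by
    linarith
  exact sub_pos.1 (pos_of_mul_pos_right key (sub_pos.2 haα).le)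

end ProbabilityTheory

theorem gamma_log_mean_iff_general {Ω : Type*} [MeasurableSpace Ω] (P : Measure Ω)
    (R R' : Ω → ℝ) (α β a b : ℝ)
    (hα : 0 < α) (hβ : 0 < β) (ha : 0 < a) (hb : 0 < b)
    (hR : Measure.map R P = gammaMeasure α β)
    (hR' : Measure.map R' P = gammaMeasure a b)
    (hmean : α / β = a / b) :
    (∫ ω, Real.log (R' ω) ∂P) < ∫ ω, Real.log (R ω) ∂P ↔ b < β := by
  have := isProbabilityMeasure_gammaMeasure hα hβ
  have := isProbabilityMeasure_gammaMeasure ha hb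
  rw [integral_comp_of_map_eq hR measurable_log.aestronglyMeasurable,
    integral_comp_of_map_eq hR' measurable_log.aestronglyMeasurable]
  refine ⟨fun hlt => ?_, integral_log_gammaMeasure_lt_of_lt hα hβ ha hb hmean⟩
  by_contra hβb
  rcases (not_lt.1 hβb).eq_or_lt with rfl | hβb
  · obtain rfl : α = a := (div_left_inj' hβ.ne').1 hmean
    exact lt_irrefl _ hlt
  · exact lt_asymm hlt (integral_log_gammaMeasure_lt_of_lt ha hb hα hβ hmean.symm hβb)

/-- for Gamma variables with equal means,
`E[log R] > E[log R'] ↔ β > b`. -/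
theorem gamma_log_mean_iff {Ω : Type*} [MeasurableSpace Ω] (P : Measure Ω)
    [IsProbabilityMeasure P] (R R' : Ω → ℝ) (α β a b : ℝ)
    (hα : 0 < α) (hβ : 0 < β) (ha : 0 < a) (hb : 0 < b)
    (hR : Measure.map R P = gammaMeasure α β)
    (hR' : Measure.map R' P = gammaMeasure a b)
    (hmean : α / β = a / b)
    (hlogR : Integrable (fun ω => Real.log (R ω)) P)
    (hlogR' : Integrable (fun ω => Real.log (R' ω)) P) :
    (∫ ω, Real.log (R' ω) ∂P) < ∫ ω, Real.log (R ω) ∂P ↔ b < β :=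
  gamma_log_mean_iff_general P R R' α β a b hα hβ ha hb hR hR' hmean
end

section
/- If φ : ℝ → ℝ is convex and α ∈ ℝ^K has nonnegative coordinates, then the function w ↦ φ(αᵀw) from ℝ^K to ℝ is supermodular. -/
/-! Writing `w ↦ αᵀw` as `L`, we have `L (x ⊓ y) ≤ L x, L y ≤ L (x ⊔ y)` because `α ≥ 0`, and
`L (x ⊓ y) + L (x ⊔ y) = L x + L y` because `L` is additive and `x ⊓ y + x ⊔ y = x + y`.
So the pair `L x, L y` is squeezed between `L (x ⊓ y), L (x ⊔ y)` with the same sum, and a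
convex function has the larger sum at the outer pair. -/

/-- A function `φ : (Fin K → ℝ) → ℝ` is supermodular if
`φ(x ⊓ y) + φ(x ⊔ y) ≥ φ(x) + φ(y)` for the coordinatewise lattice order. -/
def Supermodular {K : ℕ} (φ : (Fin K → ℝ) → ℝ) : Prop :=
  ∀ x y : Fin K → ℝ, φ x + φ y ≤ φ (x ⊓ y) + φ (x ⊔ y)

theorem ConvexOn.add_le_add_of_add_eq {𝕜 : Type*} [Field 𝕜] [LinearOrder 𝕜]
    [IsStrictOrderedRing 𝕜] {s : Set 𝕜} {f : 𝕜 → 𝕜} (hf : ConvexOn 𝕜 s f) {a b c d : 𝕜}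
    (ha : a ∈ s) (hd : d ∈ s) (hab : a ≤ b) (hac : a ≤ c) (hsum : b + c = a + d) :
    f b + f c ≤ f a + f d := by
  rcases hab.eq_or_lt with rfl | hab
  · obtain rfl : c = d := by linarith
    rfl
  rcases hac.eq_or_lt with rfl | hac
  · obtain rfl : b = d := by linarith
    rw [add_comm]
  have hbd : b < d := by linarith
  have hcd : c < d := by linarith
  have hb := hf.secant_mono_aux1 ha hd hab hbd
  have hc := hf.secant_mono_aux1 ha hd hac hcd
  -- summing the two secant bounds, the weights of `f a` and `f d` both become `d - a`
  have hsum' : (d - a) * (f b + f c) ≤ (d - a) * (f a + f d) := by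
    linear_combination hb + hc + (f d - f a) * hsum
  exact le_of_mul_le_mul_left hsum' (by linarith)

theorem ConvexOn.supermodular_comp {K : ℕ} {φ : ℝ → ℝ} (hφ : ConvexOn ℝ Set.univ φ)
    {L : (Fin K → ℝ) → ℝ} (hL : Monotone L)
    (hL_modular : ∀ x y, L (x ⊓ y) + L (x ⊔ y) = L x + L y) :
    Supermodular (fun w => φ (L w)) := fun x y =>
  hφ.add_le_add_of_add_eq (Set.mem_univ _) (Set.mem_univ _) (hL inf_le_left) (hL inf_le_right)
    (hL_modular x y).symm

/-- if `φ : ℝ → ℝ` is convex and `α` has nonnegative coordinates,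
then `w ↦ φ(αᵀw)` is supermodular. -/
theorem convex_comp_inner_supermodular {K : ℕ} (φ : ℝ → ℝ)
    (hφ : ConvexOn ℝ Set.univ φ) (α : Fin K → ℝ) (hα : ∀ i, 0 ≤ α i) :
    Supermodular (fun w => φ (∑ i, α i * w i)) := by
  refine hφ.supermodular_comp (L := (α ⬝ᵥ ·))
    (fun _ _ hxy => dotProduct_le_dotProduct_of_nonneg_left hxy hα) fun x y => ?_
  rw [← dotProduct_add, inf_add_sup, dotProduct_add]
end

section
/- Let w ~ Q₁ and v ~ Q₂ be ℝ^K-valued random vectors with Q₁ ≤_SM Q₂ in the supermodular order, and let α ∈ ℝ^K have nonnegative coordinates. Then αᵀw ≤_cx αᵀv in the convex order. -/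
open MeasureTheory

/-- `Q₁` is smaller than `Q₂` in the supermodular order. -/
def SupermodularOrder {K : ℕ} (Q₁ Q₂ : Measure (Fin K → ℝ)) : Prop :=
  ∀ φ : (Fin K → ℝ) → ℝ, Supermodular φ →
    Integrable φ Q₁ → Integrable φ Q₂ →
    ∫ w, φ w ∂Q₁ ≤ ∫ v, φ v ∂Q₂

/- If `a = p s + q t` then `b = q s + p t`; adding the two Jensen inequalities gives the claim. -/
theorem ConvexOn.map_add_map_le_of_add_eq {D : Set ℝ} {ψ : ℝ → ℝ} (hψ : ConvexOn ℝ D ψ)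
    {s t a b : ℝ} (hs : s ∈ D) (ht : t ∈ D) (hsa : s ≤ a) (hat : a ≤ t) (hab : a + b = s + t) :
    ψ a + ψ b ≤ ψ s + ψ t := by
  have ha : a ∈ segment ℝ s t := by rw [segment_eq_Icc (hsa.trans hat)]; exact ⟨hsa, hat⟩
  obtain ⟨p, q, hp, hq, hpq, rfl⟩ := ha
  have hb : b = q • s + p • t := by
    simp only [smul_eq_mul] at hab ⊢
    linear_combination hab - (s + t) * hpq
  have hψa := hψ.2 hs ht hp hq hpq
  have hψb := hψ.2 hs ht hq hp (by rw [add_comm, hpq])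
  rw [hb]
  simp only [smul_eq_mul] at hψa hψb
  linear_combination hψa + hψb + (ψ s + ψ t) * hpq

theorem ConvexOn.supermodular_comp_s12 {K : ℕ} {ψ : ℝ → ℝ} (hψ : ConvexOn ℝ Set.univ ψ)
    {f : (Fin K → ℝ) → ℝ} (hf : Monotone f)
    (hmod : ∀ x y, f x + f y = f (x ⊓ y) + f (x ⊔ y)) : Supermodular (ψ ∘ f) := fun x y =>
  hψ.map_add_map_le_of_add_eq trivial trivial (hf inf_le_left) (hf le_sup_left) (hmod x y)

theorem Finset.sum_mul_add_sum_mul_eq_inf_add_sup {ι : Type*} [Fintype ι] (α x y : ι → ℝ) :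
    ∑ i, α i * x i + ∑ i, α i * y i = ∑ i, α i * (x ⊓ y) i + ∑ i, α i * (x ⊔ y) i := by
  simp only [← Finset.sum_add_distrib, ← mul_add, Pi.inf_apply, Pi.sup_apply, min_add_max]

theorem supermodular_order_implies_convex_order_general {K : ℕ}
    (Q₁ Q₂ : Measure (Fin K → ℝ)) (hSM : SupermodularOrder Q₁ Q₂)
    (α : Fin K → ℝ) (hα : ∀ i, 0 ≤ α i) :
    ∀ ψ : ℝ → ℝ, ConvexOn ℝ Set.univ ψ →
      Integrable (fun w => ψ (∑ i, α i * w i)) Q₁ →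
      Integrable (fun v => ψ (∑ i, α i * v i)) Q₂ →
      ∫ w, ψ (∑ i, α i * w i) ∂Q₁ ≤ ∫ v, ψ (∑ i, α i * v i) ∂Q₂ := by
  intro ψ hψ
  have hmono : Monotone fun w : Fin K → ℝ => ∑ i, α i * w i := fun x y hxy =>
    Finset.sum_le_sum fun i _ => mul_le_mul_of_nonneg_left (hxy i) (hα i)
  exact hSM _ (hψ.supermodular_comp_s12 hmono (Finset.sum_mul_add_sum_mul_eq_inf_add_sup α))

/-- supermodular order of the laws implies convex order of the
weighted sums `αᵀw` (for nonnegative coefficients `α`). -/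
theorem supermodular_order_implies_convex_order {K : ℕ}
    (Q₁ Q₂ : Measure (Fin K → ℝ)) [IsProbabilityMeasure Q₁]
    [IsProbabilityMeasure Q₂] (hSM : SupermodularOrder Q₁ Q₂)
    (α : Fin K → ℝ) (hα : ∀ i, 0 ≤ α i) :
    ∀ ψ : ℝ → ℝ, ConvexOn ℝ Set.univ ψ →
      Integrable (fun w => ψ (∑ i, α i * w i)) Q₁ →
      Integrable (fun v => ψ (∑ i, α i * v i)) Q₂ →
      ∫ w, ψ (∑ i, α i * w i) ∂Q₁ ≤ ∫ v, ψ (∑ i, α i * v i) ∂Q₂ :=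
  supermodular_order_implies_convex_order_general Q₁ Q₂ hSM α hα
end

section
/- Negative dependence tightens the bound: if Q₁ ≤_SM Q₂ in the supermodular order on positive random vectors in ℝ^K and α is in the K-simplex, then E_{Q₁}[log(αᵀw)] ≥ E_{Q₂}[log(αᵀv)], assuming the expectations exist. -/
open MeasureTheory

/-!
`log (αᵀx)` is no admissible test function, as it is not supermodular on all of `ℝ^K`; the
shifted `x ↦ -log (ε + ∑ i, α i * (x i)⁺)` is: the inner sum is monotone and modular (the
coordinates of `x ⊓ y` and `x ⊔ y` are those of `x` and `y`, rearranged), and concavity of `log`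
turns this into supermodularity. On positive vectors it equals `-log (ε + αᵀx)`, so the
supermodular order compares these expectations for every `ε > 0`; dominated convergence, with
dominating function `|log (αᵀx)| + log 2`, lets `ε → 0`.
-/

open Filter Finset Real Topology

theorem sum_apply_inf_add_sum_apply_sup {ι β M : Type*} [Fintype ι] [LinearOrder β]
    [AddCommMonoid M] (h : ι → β → M) (x y : ι → β) :
    ∑ i, h i ((x ⊓ y) i) + ∑ i, h i ((x ⊔ y) i) = ∑ i, h i (x i) + ∑ i, h i (y i) := by
  simp only [← sum_add_distrib, Pi.inf_apply, Pi.sup_apply]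
  refine sum_congr rfl fun i _ => ?_
  rcases le_total (x i) (y i) with hxy | hyx
  · simp [hxy]
  · simp [hyx, add_comm]

-- `a * b - c * d = (a - c) * (b - c)` when `a + b = c + d`.
theorem log_add_log_le_of_add_eq {a b c d : ℝ} (hc : 0 < c) (hca : c ≤ a) (hcb : c ≤ b)
    (h : a + b = c + d) : log c + log d ≤ log a + log b := by
  have hd : 0 < d := by linarith
  rw [← log_mul hc.ne' hd.ne', ← log_mul (by linarith) (by linarith)]
  exact log_le_log (by positivity)
    (by nlinarith [mul_nonneg (sub_nonneg.2 hca) (sub_nonneg.2 hcb)])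

theorem supermodular_neg_log_add_sum_mul_posPart {K : ℕ} {α : Fin K → ℝ}
    (hα : ∀ i, 0 ≤ α i) {c : ℝ} (hc : 0 < c) :
    Supermodular fun x : Fin K → ℝ => -log (c + ∑ i, α i * (x i)⁺) := by
  intro x y
  set ℓ : (Fin K → ℝ) → ℝ := fun z => ∑ i, α i * (z i)⁺
  have hmono : Monotone ℓ := fun z z' hz =>
    sum_le_sum fun i _ => mul_le_mul_of_nonneg_left (posPart_mono (hz i)) (hα i)
  have hnonneg : 0 ≤ ℓ (x ⊓ y) := sum_nonneg fun i _ => mul_nonneg (hα i) (posPart_nonneg _)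
  have := log_add_log_le_of_add_eq (a := c + ℓ x) (b := c + ℓ y) (c := c + ℓ (x ⊓ y))
    (d := c + ℓ (x ⊔ y)) (by linarith)
    (add_le_add_right (hmono inf_le_left) c) (add_le_add_right (hmono inf_le_right) c)
    (by linarith [sum_apply_inf_add_sum_apply_sup (fun i t => α i * t⁺) x y])
  linarith

theorem abs_log_add_le {u ε : ℝ} (hu : 0 < u) (hε : 0 ≤ ε) :
    |log (ε + u)| ≤ |log u| + log (1 + ε) := by
  have hlog_max : log (max u 1) ≤ |log u| := by
    rcases le_total u 1 with h | h
    · simp [max_eq_right h]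
    · simpa [max_eq_left h] using le_abs_self (log u)
  have hupper : log (ε + u) ≤ log (1 + ε) + log (max u 1) := by
    rw [← log_mul (by positivity) (by positivity)]
    refine log_le_log (by positivity) ?_
    nlinarith [le_max_left u 1, le_max_right u 1]
  have hlower : log u ≤ log (ε + u) := log_le_log hu (by linarith)
  rw [abs_le]
  constructor <;> linarith [neg_abs_le (log u), log_nonneg (by linarith : (1 : ℝ) ≤ 1 + ε)]

section LogShift

variable {Ω : Type*} [MeasurableSpace Ω] {μ : Measure Ω} [IsFiniteMeasure μ] {f : Ω → ℝ}

theorem integrable_log_add (hf : AEMeasurable f μ) (hpos : ∀ᵐ ω ∂μ, 0 < f ω)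
    (hlog : Integrable (fun ω => log (f ω)) μ) {ε : ℝ} (hε : 0 ≤ ε) :
    Integrable (fun ω => log (ε + f ω)) μ :=
  (hlog.abs.add (integrable_const _)).mono'
    (measurable_log.comp_aemeasurable (hf.const_add ε)).aestronglyMeasurable
    (hpos.mono fun _ hω => abs_log_add_le hω hε)

theorem tendsto_integral_log_one_div_add (hf : AEMeasurable f μ) (hpos : ∀ᵐ ω ∂μ, 0 < f ω)
    (hlog : Integrable (fun ω => log (f ω)) μ) :
    Tendsto (fun n : ℕ => ∫ ω, log (1 / ((n : ℝ) + 1) + f ω) ∂μ) atTop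
      (𝓝 (∫ ω, log (f ω) ∂μ)) := by
  have hε : ∀ n : ℕ, 0 ≤ 1 / ((n : ℝ) + 1) := fun n => Nat.one_div_pos_of_nat.le
  have hbound (n : ℕ) :
      ∀ᵐ ω ∂μ, ‖log (1 / ((n : ℝ) + 1) + f ω)‖ ≤ |log (f ω)| + log 2 := by
    filter_upwards [hpos] with ω hω
    calc ‖log (1 / ((n : ℝ) + 1) + f ω)‖ ≤ |log (f ω)| + log (1 + 1 / ((n : ℝ) + 1)) :=
          abs_log_add_le hω (hε n)
      _ ≤ |log (f ω)| + log 2 := by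
          gcongr
          linarith [div_le_one_of_le₀ (by simp : (1 : ℝ) ≤ n + 1) (by positivity)]
  refine tendsto_integral_of_dominated_convergence _
    (fun n => (integrable_log_add hf hpos hlog (hε n)).aestronglyMeasurable)
    (hlog.abs.add (integrable_const _)) hbound ?_
  filter_upwards [hpos] with ω hω
  have hshift : Tendsto (fun n : ℕ => 1 / ((n : ℝ) + 1) + f ω) atTop (𝓝 (f ω)) := by
    simpa using tendsto_one_div_add_atTop_nhds_zero_nat.add_const (f ω)
  exact ((continuousAt_log hω.ne').tendsto).comp hshift

end LogShift

section PositiveVectors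

variable {ι : Type*} [Fintype ι] {α x : ι → ℝ}

theorem sum_mul_posPart_eq_of_pos (hx : ∀ i, 0 < x i) :
    ∑ i, α i * (x i)⁺ = ∑ i, α i * x i := by
  simp only [posPart_of_nonneg (hx _).le]

theorem sum_mul_pos_of_pos (hα : ∀ i, 0 ≤ α i) (hα₀ : ∃ j, 0 < α j)
    (hx : ∀ i, 0 < x i) :
    0 < ∑ i, α i * x i :=
  let ⟨j, hj⟩ := hα₀
  sum_pos' (fun i _ => mul_nonneg (hα i) (hx i).le) ⟨j, mem_univ j, mul_pos hj (hx j)⟩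

end PositiveVectors

/-- negative dependence tightens the bound: if `Q₁ ≤_SM Q₂`
(laws of positive random vectors) and `α` is in the simplex, then the MCO
under `Q₁` is at least the MCO under `Q₂`. -/
theorem negative_dependence_tightens {K : ℕ}
    (Q₁ Q₂ : Measure (Fin K → ℝ)) [IsProbabilityMeasure Q₁]
    [IsProbabilityMeasure Q₂]
    (hpos₁ : ∀ᵐ w ∂Q₁, ∀ i, 0 < w i) (hpos₂ : ∀ᵐ v ∂Q₂, ∀ i, 0 < v i)
    (hSM : SupermodularOrder Q₁ Q₂)
    (α : Fin K → ℝ) (hα : ∀ i, 0 ≤ α i) (hαsum : ∑ i, α i = 1)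
    (hint₁ : Integrable (fun w => Real.log (∑ i, α i * w i)) Q₁)
    (hint₂ : Integrable (fun v => Real.log (∑ i, α i * v i)) Q₂) :
    ∫ v, Real.log (∑ i, α i * v i) ∂Q₂
      ≤ ∫ w, Real.log (∑ i, α i * w i) ∂Q₁ := by
  obtain ⟨j, -, hj⟩ :=
    exists_lt_of_sum_lt (by simp [hαsum] : ∑ _ : Fin K, (0 : ℝ) < ∑ i, α i)
  have hℓ : Measurable fun x : Fin K → ℝ => ∑ i, α i * x i := by fun_prop
  have hℓpos {Q : Measure (Fin K → ℝ)} (hQ : ∀ᵐ x ∂Q, ∀ i, 0 < x i) :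
      ∀ᵐ x ∂Q, 0 < ∑ i, α i * x i :=
    hQ.mono fun _ => sum_mul_pos_of_pos hα ⟨j, hj⟩
  have hφ_ae {Q : Measure (Fin K → ℝ)} (hQ : ∀ᵐ x ∂Q, ∀ i, 0 < x i) (ε : ℝ) :
      (fun x => -log (ε + ∑ i, α i * (x i)⁺)) =ᵐ[Q]
        fun x => -log (ε + ∑ i, α i * x i) :=
    hQ.mono fun _ hx => by simp only [sum_mul_posPart_eq_of_pos hx]
  refine le_of_tendsto_of_tendsto'
    (tendsto_integral_log_one_div_add hℓ.aemeasurable (hℓpos hpos₂) hint₂)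
    (tendsto_integral_log_one_div_add hℓ.aemeasurable (hℓpos hpos₁) hint₁) fun n => ?_
  have hε : 0 < 1 / ((n : ℝ) + 1) := Nat.one_div_pos_of_nat
  have hSM_n := hSM _ (supermodular_neg_log_add_sum_mul_posPart hα hε)
    ((integrable_log_add hℓ.aemeasurable (hℓpos hpos₁) hint₁ hε.le).neg.congr
      (hφ_ae hpos₁ _).symm)
    ((integrable_log_add hℓ.aemeasurable (hℓpos hpos₂) hint₂ hε.le).neg.congr
      (hφ_ae hpos₂ _).symm)
  rw [integral_congr_ae (hφ_ae hpos₁ _), integral_congr_ae (hφ_ae hpos₂ _), integral_neg,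
    integral_neg] at hSM_n
  linarith
end
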